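/- arXiv:1102.2989 — 7 statements merged into one kernel-verified Lean document; each statement's English description precedes it below -/
import Mathlib

section
/- For positive definite complex n×n matrices A and arbitrary complex n×n matrices B, the map (A, B) ↦ B* A⁻¹ B is jointly convex: for A₁, A₂ positive definite, B₁, B₂ arbitrary, and λ ∈ [0,1], one has (λB₁+(1-λ)B₂)* (λA₁+(1-λ)A₂)⁻¹ (λB₁+(1-λ)B₂) ≤ λ B₁* A₁⁻¹ B₁ + (1-λ) B₂* A₂⁻¹ B₂ in the Loewner order. -/
open Matrix ComplexOrder

/-!
The block matrix `[[A, B], [Bᴴ, Bᴴ A⁻¹ B]]` is positive semidefinite whenever `A` is positive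
definite, since its Schur complement vanishes. This block matrix depends affinely on
`(A, B, Bᴴ A⁻¹ B)`, so a convex combination of two of them is again positive semidefinite, and
reading off the Schur complement of the combination gives the convexity inequality.
-/

namespace Matrix

variable {m n 𝕜 : Type*} [RCLike 𝕜]

theorem fromBlocks_smul_add_smul (A₁ A₂ : Matrix m m 𝕜) (B₁ B₂ : Matrix m n 𝕜)
    (D₁ D₂ : Matrix n n 𝕜) (a b : ℝ) :
    fromBlocks (a • A₁ + b • A₂) (a • B₁ + b • B₂) (a • B₁ + b • B₂)ᴴ (a • D₁ + b • D₂) =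
      a • fromBlocks A₁ B₁ B₁ᴴ D₁ + b • fromBlocks A₂ B₂ B₂ᴴ D₂ := by
  simp only [fromBlocks_smul, fromBlocks_add, conjTranspose_add, conjTranspose_smul,
    star_trivial]

theorem PosDef.smul_add_smul {A₁ A₂ : Matrix m m 𝕜} (hA₁ : A₁.PosDef) (hA₂ : A₂.PosDef)
    {a b : ℝ} (ha : 0 ≤ a) (hb : 0 ≤ b) (hab : a + b = 1) : (a • A₁ + b • A₂).PosDef := by
  rcases ha.eq_or_lt with rfl | ha
  · rw [zero_add] at hab
    simpa [hab] using hA₂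
  · exact (hA₁.smul ha).add_posSemidef (hA₂.posSemidef.smul hb)

variable [Fintype m] [Fintype n] [DecidableEq m]

theorem PosDef.posSemidef_fromBlocks_conjTranspose_mul_inv_mul {A : Matrix m m 𝕜}
    (hA : A.PosDef) (B : Matrix m n 𝕜) : (fromBlocks A B Bᴴ (Bᴴ * A⁻¹ * B)).PosSemidef := by
  let := hA.isUnit.invertible
  rw [hA.fromBlocks₁₁, sub_self]
  exact .zero

theorem posSemidef_smul_add_smul_sub_conjTranspose_mul_inv_mul {A₁ A₂ : Matrix m m 𝕜}
    (hA₁ : A₁.PosDef) (hA₂ : A₂.PosDef) (B₁ B₂ : Matrix m n 𝕜) {a b : ℝ} (ha : 0 ≤ a)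
    (hb : 0 ≤ b) (hab : a + b = 1) :
    (a • (B₁ᴴ * A₁⁻¹ * B₁) + b • (B₂ᴴ * A₂⁻¹ * B₂) -
      (a • B₁ + b • B₂)ᴴ * (a • A₁ + b • A₂)⁻¹ * (a • B₁ + b • B₂)).PosSemidef := by
  have hA := hA₁.smul_add_smul hA₂ ha hb hab
  let := hA.isUnit.invertible
  rw [← hA.fromBlocks₁₁, fromBlocks_smul_add_smul]
  exact ((hA₁.posSemidef_fromBlocks_conjTranspose_mul_inv_mul B₁).smul ha).add
    ((hA₂.posSemidef_fromBlocks_conjTranspose_mul_inv_mul B₂).smul hb)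

end Matrix

/-- Joint convexity of `(A, B) ↦ Bᴴ A⁻¹ B` in the Loewner order. -/
theorem jointly_convex_conj_inv {n : ℕ} (A₁ A₂ B₁ B₂ : Matrix (Fin n) (Fin n) ℂ)
    (hA₁ : A₁.PosDef) (hA₂ : A₂.PosDef) (l : ℝ) (hl0 : 0 ≤ l) (hl1 : l ≤ 1) :
    (l • (B₁ᴴ * A₁⁻¹ * B₁) + (1 - l) • (B₂ᴴ * A₂⁻¹ * B₂) -
      (l • B₁ + (1 - l) • B₂)ᴴ * (l • A₁ + (1 - l) • A₂)⁻¹ *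
        (l • B₁ + (1 - l) • B₂)).PosSemidef :=
  posSemidef_smul_add_smul_sub_conjTranspose_mul_inv_mul hA₁ hA₂ B₁ B₂ hl0 (sub_nonneg.2 hl1)
    (add_sub_cancel l 1)
end

section
/- For positive definite n×n matrices A and vectors ξ ∈ ℂⁿ, the map (A, ξ) ↦ ⟨ξ, A⁻¹ ξ⟩ is jointly convex: for positive definite A₁, A₂, vectors ξ₁, ξ₂, and λ ∈ [0,1], ⟨λξ₁+(1-λ)ξ₂, (λA₁+(1-λ)A₂)⁻¹ (λξ₁+(1-λ)ξ₂)⟩ ≤ λ⟨ξ₁, A₁⁻¹ξ₁⟩ + (1-λ)⟨ξ₂, A₂⁻¹ξ₂⟩. -/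
open Matrix ComplexOrder

/-!
Completing the square gives the variational formula
`Re⟨ξ, B⁻¹ξ⟩ = max_η (2 Re⟨η, ξ⟩ - Re⟨η, Bη⟩)`, the maximum being attained at `η = B⁻¹ξ`.
For fixed `η` the bracket is affine in `(B, ξ)` jointly, so evaluating it at the maximiser
for the convex combination and bounding each part by its own maximum gives joint convexity.
-/

namespace Matrix

variable {𝕜 ι : Type*} [RCLike 𝕜]

lemma PosDef.smul_add_one_sub_smul {A B : Matrix ι ι 𝕜} (hA : A.PosDef) (hB : B.PosDef) {l : ℝ}
    (hl0 : 0 ≤ l) (hl1 : l ≤ 1) : (l • A + (1 - l) • B).PosDef := by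
  rcases hl1.lt_or_eq with hl1 | rfl
  · exact PosDef.posSemidef_add (hA.posSemidef.smul hl0) (hB.smul (sub_pos.2 hl1))
  · simpa using hA

variable [Fintype ι]

lemma re_star_dotProduct_comm (v w : ι → 𝕜) :
    RCLike.re (star v ⬝ᵥ w) = RCLike.re (star w ⬝ᵥ v) := by
  rw [star_dotProduct, RCLike.star_def, RCLike.conj_re]

def variationalForm (B : Matrix ι ι 𝕜) (ξ η : ι → 𝕜) : ℝ :=
  2 * RCLike.re (star η ⬝ᵥ ξ) - RCLike.re (star η ⬝ᵥ (B *ᵥ η))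

lemma variationalForm_smul_add (A₁ A₂ : Matrix ι ι 𝕜) (ξ₁ ξ₂ η : ι → 𝕜) (a b : ℝ) :
    variationalForm (a • A₁ + b • A₂) (a • ξ₁ + b • ξ₂) η =
      a * variationalForm A₁ ξ₁ η + b * variationalForm A₂ ξ₂ η := by
  simp only [variationalForm, add_mulVec, smul_mulVec, dotProduct_add, dotProduct_smul,
    map_add, RCLike.smul_re]
  ring

lemma IsHermitian.variationalForm_eq {B : Matrix ι ι 𝕜} (hB : B.IsHermitian) {ξ u : ι → 𝕜}
    (hu : B *ᵥ u = ξ) (η : ι → 𝕜) :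
    variationalForm B ξ η =
      RCLike.re (star u ⬝ᵥ ξ) - RCLike.re (star (η - u) ⬝ᵥ (B *ᵥ (η - u))) := by
  have hcross : star u ⬝ᵥ (B *ᵥ η) = star ξ ⬝ᵥ η := by
    rw [dotProduct_mulVec, ← hu, star_mulVec, hB.eq]
  rw [variationalForm, mulVec_sub, hu, star_sub, sub_dotProduct, dotProduct_sub, dotProduct_sub,
    hcross]
  simp only [map_sub]
  rw [re_star_dotProduct_comm ξ η]
  ring

variable [DecidableEq ι]

theorem PosDef.isGreatest_variationalForm {B : Matrix ι ι 𝕜} (hB : B.PosDef) (ξ : ι → 𝕜) :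
    IsGreatest (Set.range (variationalForm B ξ)) (RCLike.re (star ξ ⬝ᵥ (B⁻¹ *ᵥ ξ))) := by
  have hu : B *ᵥ (B⁻¹ *ᵥ ξ) = ξ := by
    rw [mulVec_mulVec, mul_nonsing_inv _ ((isUnit_iff_isUnit_det B).mp hB.isUnit), one_mulVec]
  refine ⟨⟨B⁻¹ *ᵥ ξ, ?_⟩, ?_⟩
  · rw [hB.isHermitian.variationalForm_eq hu, sub_self, mulVec_zero, dotProduct_zero, map_zero,
      sub_zero, re_star_dotProduct_comm]
  · rintro _ ⟨η, rfl⟩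
    rw [hB.isHermitian.variationalForm_eq hu, re_star_dotProduct_comm ξ]
    exact sub_le_self _ (hB.posSemidef.re_dotProduct_nonneg _)

end Matrix

/-- Joint convexity of `(A, ξ) ↦ ⟨ξ, A⁻¹ ξ⟩` for positive definite matrices `A`
and vectors `ξ ∈ ℂⁿ`. -/
theorem jointly_convex_inner_inv {n : ℕ} (A₁ A₂ : Matrix (Fin n) (Fin n) ℂ)
    (hA₁ : A₁.PosDef) (hA₂ : A₂.PosDef) (ξ₁ ξ₂ : Fin n → ℂ)
    (l : ℝ) (hl0 : 0 ≤ l) (hl1 : l ≤ 1) :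
    (star (l • ξ₁ + (1 - l) • ξ₂) ⬝ᵥ
        ((l • A₁ + (1 - l) • A₂)⁻¹ *ᵥ (l • ξ₁ + (1 - l) • ξ₂))).re ≤
      l * (star ξ₁ ⬝ᵥ (A₁⁻¹ *ᵥ ξ₁)).re + (1 - l) * (star ξ₂ ⬝ᵥ (A₂⁻¹ *ᵥ ξ₂)).re := by
  obtain ⟨⟨η, hη⟩, -⟩ := (hA₁.smul_add_one_sub_smul hA₂ hl0 hl1).isGreatest_variationalForm
    (l • ξ₁ + (1 - l) • ξ₂)
  have h₁ := (hA₁.isGreatest_variationalForm ξ₁).2 ⟨η, rfl⟩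
  have h₂ := (hA₂.isGreatest_variationalForm ξ₂).2 ⟨η, rfl⟩
  rw [← RCLike.re_to_complex, ← hη, variationalForm_smul_add]
  exact add_le_add (mul_le_mul_of_nonneg_left h₁ hl0)
    (mul_le_mul_of_nonneg_left h₂ (sub_nonneg.2 hl1))
end

section
/- Every function f : (0,∞) → (0,∞) satisfying: f is operator monotone, f(t) = t·f(1/t) for all t > 0, and f(1) = 1, obeys the pointwise bounds 2t/(t+1) ≤ f(t) ≤ (t+1)/2 for all t > 0. -/
open Matrix ComplexOrder

/-- The matrix obtained by applying `f : ℝ → ℝ` to a Hermitian matrix via the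
spectral theorem (functional calculus). -/
noncomputable def herFun {n : ℕ} (f : ℝ → ℝ) {A : Matrix (Fin n) (Fin n) ℂ}
    (hA : A.IsHermitian) : Matrix (Fin n) (Fin n) ℂ :=
  (hA.eigenvectorUnitary : Matrix (Fin n) (Fin n) ℂ) *
    Matrix.diagonal (Complex.ofReal ∘ f ∘ hA.eigenvalues) *
    star (hA.eigenvectorUnitary : Matrix (Fin n) (Fin n) ℂ)

/-- `f` is operator monotone on `(0, ∞)`: for all matrix sizes `n` and positive
definite `A ≤ B` one has `f(A) ≤ f(B)` in the Loewner order. -/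
def OperatorMonotone (f : ℝ → ℝ) : Prop :=
  ∀ (n : ℕ) (A B : Matrix (Fin n) (Fin n) ℂ) (hA : A.PosDef) (hB : B.PosDef),
    (B - A).PosSemidef → (herFun f hB.1 - herFun f hA.1).PosSemidef

/-!
Operator monotonicity is only tested on `2 × 2` matrices. For a rank-one projection `P` onto
`(√c, √(1 - c))`, the matrix `X = r + (s - r) P` has `X₀₀ = c s + (1 - c) r` and
`f(X)₀₀ = c f(s) + (1 - c) f(r)`, while `X ≤ diag(u, y)` for any `u > X₀₀` once `y` is large.
Comparing `(0,0)` entries gives `c f(s) + (1 - c) f(r) ≤ f(u)` whenever `c s + (1 - c) r < u`.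
With `s = t`, `r = 1/t`, `c = 1/(t+1)` the mean is `1` and, by `f(1/t) = f(t)/t`, the left side
is `2 f(t)/(t+1)`; since `f(u) ≤ u f(1) = u` for `u > 1`, letting `u ↓ 1` gives `f(t) ≤ (t+1)/2`.

Inversion is operator antitone on positive definite matrices, so `t ↦ 1/f(1/t) = t/f(t)` is again
operator monotone, symmetric and normalised; its upper bound is the lower bound for `f`.
-/

-- `Matrix.Norms.L2Operator` provides the C⋆-algebra structure behind
-- `CStarAlgebra.ringInverse_le_ringInverse`.
open scoped MatrixOrder Matrix.Norms.L2Operator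

section StarProjection

variable {A : Type*} [Ring A] [StarRing A] [Algebra ℝ A] [TopologicalSpace A]
  [ContinuousFunctionalCalculus ℝ A IsSelfAdjoint] {P : A}

lemma algebraMap_add_smul_eq_cfc (hP : IsSelfAdjoint P) (r s : ℝ) :
    algebraMap ℝ A r + (s - r) • P = cfc (fun x => r + (s - r) * x) P := by
  rw [cfc_add .., cfc_const .., cfc_const_mul_id ..]

theorem cfc_algebraMap_add_smul_of_isStarProjection [ContinuousMap.UniqueHom ℝ A]
    (hP : IsStarProjection P) (f : ℝ → ℝ) (r s : ℝ) :
    cfc f (algebraMap ℝ A r + (s - r) • P) = algebraMap ℝ A (f r) + (f s - f r) • P := by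
  rw [algebraMap_add_smul_eq_cfc hP.isSelfAdjoint, algebraMap_add_smul_eq_cfc hP.isSelfAdjoint,
    ← cfc_comp' f _ P (((hP.isIdempotentElem.finite_spectrum ℝ).image _).continuousOn f)]
  refine cfc_congr fun x hx => ?_
  rcases hP.isIdempotentElem.spectrum_subset ℝ hx with rfl | rfl <;> simp

theorem isStrictlyPositive_algebraMap_add_smul [PartialOrder A] [StarOrderedRing A]
    [NonnegSpectrumClass ℝ A] (hP : IsStarProjection P) {r s : ℝ} (hr : 0 < r) (hs : 0 < s) :
    IsStrictlyPositive (algebraMap ℝ A r + (s - r) • P) := by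
  rw [algebraMap_add_smul_eq_cfc hP.isSelfAdjoint, cfc_isStrictlyPositive_iff ..]
  intro x hx
  rcases hP.isIdempotentElem.spectrum_subset ℝ hx with rfl | rfl <;> simpa

end StarProjection

lemma herFun_eq_cfc {n : ℕ} (f : ℝ → ℝ) {A : Matrix (Fin n) (Fin n) ℂ} (hA : A.IsHermitian) :
    herFun f hA = cfc f A := by
  rw [hA.cfc_eq, IsHermitian.cfc, Unitary.conjStarAlgAut_apply]
  rfl

theorem operatorMonotone_iff_cfc {f : ℝ → ℝ} :
    OperatorMonotone f ↔ ∀ (n : ℕ) (A B : Matrix (Fin n) (Fin n) ℂ),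
      IsStrictlyPositive A → A ≤ B → cfc f A ≤ cfc f B := by
  refine ⟨fun hf n A B hA hAB => ?_, fun hf n A B hA hB hAB => ?_⟩
  · have := hf n A B hA.posDef (hA.of_le hAB).posDef hAB
    rwa [herFun_eq_cfc, herFun_eq_cfc] at this
  · rw [herFun_eq_cfc, herFun_eq_cfc]
    exact hf n A B hA.isStrictlyPositive hAB

lemma isStrictlyPositive_cfc_of_pos {n : ℕ} {f : ℝ → ℝ} (hf : ∀ t, 0 < t → 0 < f t)
    {A : Matrix (Fin n) (Fin n) ℂ} (hA : IsStrictlyPositive A) :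
    IsStrictlyPositive (cfc f A) := by
  rw [cfc_isStrictlyPositive_iff f A (A.finite_real_spectrum.continuousOn f)]
  exact fun x hx =>
    hf x ((StarOrderedRing.isStrictlyPositive_iff_spectrum_pos (R := ℝ) A).mp hA x hx)

lemma cfc_inv_comp_inv {n : ℕ} {f : ℝ → ℝ} (hf : ∀ t, 0 < t → 0 < f t)
    {A : Matrix (Fin n) (Fin n) ℂ} (hA : IsStrictlyPositive A) :
    cfc (fun t => (f t⁻¹)⁻¹) A = Ring.inverse (cfc f (Ring.inverse A)) := by
  have hspec := (StarOrderedRing.isStrictlyPositive_iff_spectrum_pos (R := ℝ) A).mp hA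
  rw [cfc_inv (fun t => f t⁻¹) A (fun x hx => (hf _ (inv_pos.2 (hspec x hx))).ne')
      (A.finite_real_spectrum.continuousOn _),
    cfc_comp' f (·⁻¹) A ((A.finite_real_spectrum.image _).continuousOn f)
      (A.finite_real_spectrum.continuousOn _),
    cfc_ringInverse_id A hA.isUnit]

theorem OperatorMonotone.inv_comp_inv {f : ℝ → ℝ} (hpos : ∀ t, 0 < t → 0 < f t)
    (hf : OperatorMonotone f) : OperatorMonotone (fun t => (f t⁻¹)⁻¹) := by
  rw [operatorMonotone_iff_cfc] at hf ⊢
  intro n A B hA hAB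
  have hB := hA.of_le hAB
  rw [cfc_inv_comp_inv hpos hA, cfc_inv_comp_inv hpos hB]
  exact CStarAlgebra.ringInverse_le_ringInverse
    (hf n _ _ hB.ringInverse (CStarAlgebra.ringInverse_le_ringInverse hAB))
    (isStrictlyPositive_cfc_of_pos hpos hB.ringInverse)

section RankOne

variable {n : Type*} [Fintype n]

lemma isStarProjection_vecMulVec_self_star {𝕜 : Type*} [Semiring 𝕜] [StarRing 𝕜]
    {v : n → 𝕜} (hv : star v ⬝ᵥ v = 1) : IsStarProjection (vecMulVec v (star v)) where
  isIdempotentElem := by rw [IsIdempotentElem, vecMulVec_mul_vecMulVec, hv, one_smul]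
  isSelfAdjoint := by
    rw [IsSelfAdjoint, star_eq_conjTranspose, conjTranspose_vecMulVec, star_star]

lemma algebraMap_add_smul_vecMulVec_ofReal_apply [DecidableEq n] (r t : ℝ) (x : n → ℝ)
    (i j : n) :
    (algebraMap ℝ (Matrix n n ℂ) r +
        t • vecMulVec (fun k => (x k : ℂ)) (star fun k => (x k : ℂ))) i j =
      (((if i = j then r else 0) + t * (x i * x j) : ℝ) : ℂ) := by
  simp [Matrix.algebraMap_matrix_apply, vecMulVec_apply, apply_ite]

end RankOne

lemma le_two_by_two_diag_of_lt {a b d u : ℝ} (h : a < u) :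
    !![(a : ℂ), b; b, d] ≤ !![(u : ℂ), 0; 0, ((d + b ^ 2 / (u - a) : ℝ) : ℂ)] := by
  have hua : (u : ℂ) - a ≠ 0 := by exact_mod_cast (sub_pos.2 h).ne'
  set w : Fin 2 → ℂ := ![(u : ℂ) - a, -b]
  have : !![(u : ℂ), 0; 0, ((d + b ^ 2 / (u - a) : ℝ) : ℂ)] - !![(a : ℂ), b; b, d] =
      (u - a)⁻¹ • vecMulVec w (star w) := by
    ext i j
    fin_cases i <;> fin_cases j <;>
      simp only [Matrix.sub_apply, Matrix.smul_apply, vecMulVec_apply, Pi.star_apply, w] <;>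
      simp <;> field_simp
  rw [Matrix.le_iff, this]
  exact (posSemidef_vecMulVec_self_star w).smul (inv_nonneg.2 (sub_pos.2 h).le)

theorem OperatorMonotone.convex_combination_le {f : ℝ → ℝ} (hf : OperatorMonotone f)
    {c s r u : ℝ} (hc₀ : 0 ≤ c) (hc₁ : c ≤ 1) (hs : 0 < s) (hr : 0 < r)
    (hu : c * s + (1 - c) * r < u) : c * f s + (1 - c) * f r ≤ f u := by
  set x : Fin 2 → ℝ := ![√c, √(1 - c)]
  set e : Fin 2 → ℝ := ![1, 0]
  set P := vecMulVec (fun k => (x k : ℂ)) (star fun k => (x k : ℂ))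
  set Q := vecMulVec (fun k => (e k : ℂ)) (star fun k => (e k : ℂ))
  have hx0 : x 0 * x 0 = c := Real.mul_self_sqrt hc₀
  have hx1 : x 1 * x 1 = 1 - c := Real.mul_self_sqrt (sub_nonneg.2 hc₁)
  have hP : IsStarProjection P := isStarProjection_vecMulVec_self_star <| by
    simp [dotProduct, Fin.sum_univ_two, ← Complex.ofReal_mul, hx0, hx1]
  have hQ : IsStarProjection Q := isStarProjection_vecMulVec_self_star <| by
    simp [e, dotProduct, Fin.sum_univ_two]
  set a := r + (s - r) * (x 0 * x 0)
  set b := (s - r) * (x 0 * x 1)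
  set d := r + (s - r) * (x 1 * x 1)
  set y := d + b ^ 2 / (u - a)
  have hau : a < u := by simp only [a, hx0]; linarith
  have hX :
      algebraMap ℝ (Matrix (Fin 2) (Fin 2) ℂ) r + (s - r) • P = !![(a : ℂ), b; b, d] := by
    ext i j
    rw [algebraMap_add_smul_vecMulVec_ofReal_apply]
    fin_cases i <;> fin_cases j <;> simp [a, b, d, mul_comm (x 0)]
  have hY :
      algebraMap ℝ (Matrix (Fin 2) (Fin 2) ℂ) y + (u - y) • Q = !![(u : ℂ), 0; 0, y] := by
    ext i j
    rw [algebraMap_add_smul_vecMulVec_ofReal_apply]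
    fin_cases i <;> fin_cases j <;> simp [e]
  have h := operatorMonotone_iff_cfc.mp hf 2 _ (algebraMap ℝ _ y + (u - y) • Q)
    (isStrictlyPositive_algebraMap_add_smul hP hr hs)
    (by rw [hX, hY]; exact le_two_by_two_diag_of_lt hau)
  rw [cfc_algebraMap_add_smul_of_isStarProjection hP,
    cfc_algebraMap_add_smul_of_isStarProjection hQ] at h
  have h00 := (Matrix.le_iff.mp h).diag_nonneg (i := 0)
  rw [Matrix.sub_apply, algebraMap_add_smul_vecMulVec_ofReal_apply,
    algebraMap_add_smul_vecMulVec_ofReal_apply] at h00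
  simp [e, hx0] at h00
  norm_cast at h00
  linarith

theorem OperatorMonotone.apply_le_of_lt {f : ℝ → ℝ} (hf : OperatorMonotone f) {a b : ℝ}
    (ha : 0 < a) (hab : a < b) : f a ≤ f b := by
  simpa using hf.convex_combination_le zero_le_one le_rfl ha ha (by simpa using hab)

lemma apply_inv_eq_div {f : ℝ → ℝ} (hsym : ∀ t : ℝ, 0 < t → f t = t * f t⁻¹) {t : ℝ}
    (ht : 0 < t) : f t⁻¹ = f t / t := by
  rw [hsym t ht]
  field_simp

theorem OperatorMonotone.le_add_one_div_two {f : ℝ → ℝ} (hf : OperatorMonotone f)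
    (hsym : ∀ t : ℝ, 0 < t → f t = t * f t⁻¹) (hone : f 1 = 1) {t : ℝ} (ht : 0 < t) :
    f t ≤ (t + 1) / 2 := by
  have hle : ∀ u, 1 < u → f u ≤ u := fun u hu => calc
    f u = u * f u⁻¹ := hsym u (by linarith)
    _ ≤ u * f 1 := by
      gcongr
      exact hf.apply_le_of_lt (by positivity) (inv_lt_one_of_one_lt₀ hu)
    _ = u := by rw [hone, mul_one]
  have hmean : ∀ u, 1 < u → 2 * f t / (t + 1) ≤ f u := fun u hu => by
    have hc : (t + 1)⁻¹ * t + (1 - (t + 1)⁻¹) * t⁻¹ = 1 := by field_simp; ring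
    have := hf.convex_combination_le (by positivity) (inv_le_one_of_one_le₀ (by linarith)) ht
      (inv_pos.2 ht) (hc.trans_lt hu)
    have hval : (t + 1)⁻¹ * f t + (1 - (t + 1)⁻¹) * f t⁻¹ = 2 * f t / (t + 1) := by
      rw [apply_inv_eq_div hsym ht]; field_simp; ring
    rwa [hval] at this
  have : 2 * f t / (t + 1) ≤ 1 :=
    le_of_forall_gt_imp_ge_of_dense fun u hu => (hmean u hu).trans (hle u hu)
  rw [div_le_one (by linarith)] at this
  linarith

/-- Every `f ∈ F_op` satisfies `2t/(t+1) ≤ f(t) ≤ (t+1)/2` for `t > 0`. -/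
theorem fop_pointwise_bounds (f : ℝ → ℝ) (hfpos : ∀ t : ℝ, 0 < t → 0 < f t)
    (hmono : OperatorMonotone f) (hsym : ∀ t : ℝ, 0 < t → f t = t * f t⁻¹)
    (hone : f 1 = 1) :
    ∀ t : ℝ, 0 < t → 2 * t / (t + 1) ≤ f t ∧ f t ≤ (t + 1) / 2 := by
  intro t ht
  refine ⟨?_, hmono.le_add_one_div_two hsym hone ht⟩
  have hgsym : ∀ t : ℝ, 0 < t → (f t⁻¹)⁻¹ = t * (f t⁻¹⁻¹)⁻¹ := fun t ht => by
    rw [apply_inv_eq_div hsym ht, inv_inv, inv_div, div_eq_mul_inv]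
  have := (hmono.inv_comp_inv hfpos).le_add_one_div_two hgsym (by simp [hone]) ht
  rw [apply_inv_eq_div hsym ht, inv_div, div_le_div_iff₀ (hfpos t ht) two_pos] at this
  rw [div_le_iff₀ (by linarith)]
  linarith
end

section
/- For positive definite density matrices ρ, σ, the χ² divergence with f(t) = (1+t)/2 (largest element of F_op), given by χ²(ρ,σ) = Tr((ρ-σ) C(ρ-σ)) where C is the inverse of the superoperator A ↦ (σA + Aσ)/2, is jointly convex in (ρ,σ). -/
/-!
For Hermitian `X` and `z` with `σz + zσ = 2X`, the quantity `Re Tr(Xz)` is the maximum over `w` of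
`2 Re Tr(Xw) - ½ Re Tr(wᴴ(σw + wσ))`, attained at `w = z`: the gap is
`½ Re Tr((z - w)ᴴ(σ(z - w) + (z - w)σ))`, which is nonnegative for `σ ≥ 0` because the
superoperator `w ↦ σw + wσ` is self-adjoint and positive for the Hilbert–Schmidt inner product.
Each function under the maximum is jointly linear in `(X, σ)`, so `χ²` is a pointwise supremum
of linear functions of `(ρ - σ, σ)` and hence jointly convex.
-/

open Matrix ComplexOrder

variable {m : Type*}

namespace Matrix

theorem convex_setOf_posDef : Convex ℝ {A : Matrix m m ℂ | A.PosDef} := by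
  intro A hA B hB a b ha hb hab
  rcases ha.eq_or_lt with rfl | ha
  · simpa [show b = 1 by linarith] using hB
  · exact (PosDef.smul hA ha).add_posSemidef (PosSemidef.smul hB.posSemidef hb)

variable [Fintype m]

theorem PosSemidef.trace_conjTranspose_mul_anticomm_nonneg {σ : Matrix m m ℂ}
    (hσ : σ.PosSemidef) (w : Matrix m m ℂ) : 0 ≤ (wᴴ * (σ * w + w * σ)).trace := by
  have h : (wᴴ * (σ * w + w * σ)).trace = (wᴴ * σ * w).trace + (w * σ * wᴴ).trace := by
    rw [mul_add, trace_add, ← mul_assoc, trace_mul_comm wᴴ, mul_assoc]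
  rw [h]
  exact add_nonneg (hσ.conjTranspose_mul_mul_same w).trace_nonneg
    (hσ.mul_mul_conjTranspose_same w).trace_nonneg

theorem IsHermitian.trace_conjTranspose_mul_anticomm {σ : Matrix m m ℂ} (hσ : σ.IsHermitian)
    (A B : Matrix m m ℂ) :
    (Aᴴ * (σ * B + B * σ)).trace = ((σ * A + A * σ)ᴴ * B).trace := by
  simp only [conjTranspose_add, conjTranspose_mul, hσ.eq, mul_add, add_mul, trace_add]
  rw [← mul_assoc, trace_mul_comm Aᴴ (B * σ), trace_mul_comm (σ * Aᴴ) B, mul_assoc, mul_assoc,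
    add_comm]

theorem IsHermitian.re_trace_conjTranspose_mul {X : Matrix m m ℂ} (hX : X.IsHermitian)
    (A : Matrix m m ℂ) : (Aᴴ * X).trace.re = (X * A).trace.re := by
  rw [← Complex.conj_re, ← Complex.star_def, ← trace_conjTranspose, conjTranspose_mul,
    conjTranspose_conjTranspose, hX.eq]

end Matrix

variable [Fintype m]

noncomputable def chiSqDual (σ X w : Matrix m m ℂ) : ℝ :=
  2 * (X * w).trace.re - (wᴴ * (σ * w + w * σ)).trace.re / 2

theorem chiSqDual_add_smul (a b : ℝ) (σ₁ σ₂ X₁ X₂ w : Matrix m m ℂ) :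
    chiSqDual (a • σ₁ + b • σ₂) (a • X₁ + b • X₂) w =
      a * chiSqDual σ₁ X₁ w + b * chiSqDual σ₂ X₂ w := by
  simp only [chiSqDual, add_mul, mul_add, smul_mul_assoc, mul_smul_comm, trace_add, trace_smul,
    Complex.add_re, Complex.smul_re, smul_eq_mul]
  ring

variable {σ X z : Matrix m m ℂ}

theorem chiSqDual_self (hX : X.IsHermitian) (hz : σ * z + z * σ = (2 : ℂ) • X) :
    chiSqDual σ X z = (X * z).trace.re := by
  rw [chiSqDual, hz, mul_smul_comm, trace_smul, smul_eq_mul, Complex.mul_re, Complex.re_ofNat,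
    Complex.im_ofNat, hX.re_trace_conjTranspose_mul]
  ring

theorem chiSqDual_le (hσ : σ.PosSemidef) (hX : X.IsHermitian) (hz : σ * z + z * σ = (2 : ℂ) • X)
    (w : Matrix m m ℂ) : chiSqDual σ X w ≤ (X * z).trace.re := by
  have hgap := (Complex.nonneg_iff.mp (hσ.trace_conjTranspose_mul_anticomm_nonneg (z - w))).1
  have hexpand : ((z - w)ᴴ * (σ * (z - w) + (z - w) * σ)).trace =
      (zᴴ * (σ * z + z * σ)).trace - (zᴴ * (σ * w + w * σ)).trace
        - (wᴴ * (σ * z + z * σ)).trace + (wᴴ * (σ * w + w * σ)).trace := by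
    simp only [conjTranspose_sub, mul_sub, sub_mul, mul_add, trace_sub, trace_add]
    ring
  rw [hexpand, hσ.isHermitian.trace_conjTranspose_mul_anticomm z w, hz, conjTranspose_smul,
    hX.eq] at hgap
  simp only [mul_smul_comm, smul_mul_assoc, trace_smul, smul_eq_mul, star_ofNat, Complex.add_re,
    Complex.sub_re, Complex.mul_re, Complex.re_ofNat, Complex.im_ofNat,
    hX.re_trace_conjTranspose_mul] at hgap
  rw [chiSqDual]
  linarith

theorem chi_sq_largest_convex_general {n : ℕ} (ρ₁ ρ₂ σ₁ σ₂ : Matrix (Fin n) (Fin n) ℂ)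
    (hρ₁ : ρ₁.PosDef) (hρ₂ : ρ₂.PosDef) (hσ₁ : σ₁.PosDef) (hσ₂ : σ₂.PosDef)
    (l : ℝ) (hl0 : 0 ≤ l) (hl1 : l ≤ 1)
    (C : Matrix (Fin n) (Fin n) ℂ →
      Matrix (Fin n) (Fin n) ℂ →ₗ[ℂ] Matrix (Fin n) (Fin n) ℂ)
    (hC : ∀ σ : Matrix (Fin n) (Fin n) ℂ, σ.PosDef →
      ∀ A : Matrix (Fin n) (Fin n) ℂ, σ * C σ A + C σ A * σ = (2 : ℂ) • A) :
    ((((l • ρ₁ + (1 - l) • ρ₂) - (l • σ₁ + (1 - l) • σ₂)) *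
        C (l • σ₁ + (1 - l) • σ₂)
          ((l • ρ₁ + (1 - l) • ρ₂) - (l • σ₁ + (1 - l) • σ₂))).trace).re ≤
      l * (((ρ₁ - σ₁) * C σ₁ (ρ₁ - σ₁)).trace).re +
        (1 - l) * (((ρ₂ - σ₂) * C σ₂ (ρ₂ - σ₂)).trace).re := by
  set σ := l • σ₁ + (1 - l) • σ₂
  have hσ : σ.PosDef := convex_setOf_posDef hσ₁ hσ₂ hl0 (sub_nonneg.mpr hl1) (by ring)
  have hX₁ : (ρ₁ - σ₁).IsHermitian := hρ₁.isHermitian.sub hσ₁.isHermitian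
  have hX₂ : (ρ₂ - σ₂).IsHermitian := hρ₂.isHermitian.sub hσ₂.isHermitian
  have hX : (l • (ρ₁ - σ₁) + (1 - l) • (ρ₂ - σ₂)).IsHermitian :=
    (hX₁.smul (IsSelfAdjoint.all l)).add (hX₂.smul (IsSelfAdjoint.all (1 - l)))
  rw [show l • ρ₁ + (1 - l) • ρ₂ - σ = l • (ρ₁ - σ₁) + (1 - l) • (ρ₂ - σ₂) by module]
  set z := C σ (l • (ρ₁ - σ₁) + (1 - l) • (ρ₂ - σ₂))
  calc _ = chiSqDual σ (l • (ρ₁ - σ₁) + (1 - l) • (ρ₂ - σ₂)) z :=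
        (chiSqDual_self hX (hC σ hσ _)).symm
    _ = l * chiSqDual σ₁ (ρ₁ - σ₁) z + (1 - l) * chiSqDual σ₂ (ρ₂ - σ₂) z :=
        chiSqDual_add_smul _ _ _ _ _ _ _
    _ ≤ _ := add_le_add
        (mul_le_mul_of_nonneg_left (chiSqDual_le hσ₁.posSemidef hX₁ (hC σ₁ hσ₁ _) z) hl0)
        (mul_le_mul_of_nonneg_left (chiSqDual_le hσ₂.posSemidef hX₂ (hC σ₂ hσ₂ _) z)
          (sub_nonneg.mpr hl1))

/-- For positive definite density matrices `ρ, σ`, the `χ²` divergence with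
`f(t) = (1+t)/2` (largest element of `F_op`), given by
`χ²(ρ,σ) = Tr((ρ-σ) C_σ(ρ-σ))` where `C_σ` is the inverse of the superoperator
`A ↦ (σA + Aσ)/2`, is jointly convex in `(ρ,σ)`. -/
theorem chi_sq_largest_convex {n : ℕ} (ρ₁ ρ₂ σ₁ σ₂ : Matrix (Fin n) (Fin n) ℂ)
    (hρ₁ : ρ₁.PosDef) (hρ₂ : ρ₂.PosDef) (hσ₁ : σ₁.PosDef) (hσ₂ : σ₂.PosDef)
    (hρ₁t : ρ₁.trace = 1) (hρ₂t : ρ₂.trace = 1) (hσ₁t : σ₁.trace = 1) (hσ₂t : σ₂.trace = 1)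
    (l : ℝ) (hl0 : 0 ≤ l) (hl1 : l ≤ 1)
    (C : Matrix (Fin n) (Fin n) ℂ →
      Matrix (Fin n) (Fin n) ℂ →ₗ[ℂ] Matrix (Fin n) (Fin n) ℂ)
    (hC : ∀ σ : Matrix (Fin n) (Fin n) ℂ, σ.PosDef →
      ∀ A : Matrix (Fin n) (Fin n) ℂ, σ * C σ A + C σ A * σ = (2 : ℂ) • A) :
    ((((l • ρ₁ + (1 - l) • ρ₂) - (l • σ₁ + (1 - l) • σ₂)) *
        C (l • σ₁ + (1 - l) • σ₂)
          ((l • ρ₁ + (1 - l) • ρ₂) - (l • σ₁ + (1 - l) • σ₂))).trace).re ≤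
      l * (((ρ₁ - σ₁) * C σ₁ (ρ₁ - σ₁)).trace).re +
        (1 - l) * (((ρ₂ - σ₂) * C σ₂ (ρ₂ - σ₂)).trace).re :=
  chi_sq_largest_convex_general ρ₁ ρ₂ σ₁ σ₂ hρ₁ hρ₂ hσ₁ hσ₂ l hl0 hl1 C hC
end

section
/- For every measurable weight function h : [0,1] → [0,1], the function f(t) = ((1+t)/2)·exp(−∫₀¹ (1−λ²)(1−t)² / ((λ+t)(1+λt)(1+λ)²) · h(λ) dλ) satisfies f(1) = 1 and the symmetry f(t) = t·f(1/t) for all t > 0. -/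
open MeasureTheory

/-- For every measurable weight function `h : [0,1] → [0,1]`, the function
`f(t) = ((1+t)/2)·exp(−∫₀¹ (1−λ²)(1−t)²/((λ+t)(1+λt)(1+λ)²)·h(λ) dλ)`
satisfies `f(1) = 1` and `f(t) = t·f(1/t)` for `t > 0`. -/
theorem canonical_representation_properties (h : ℝ → ℝ) (hmeas : Measurable h)
    (hbound : ∀ l ∈ Set.Icc (0 : ℝ) 1, 0 ≤ h l ∧ h l ≤ 1)
    (f : ℝ → ℝ)
    (hf : ∀ t : ℝ, f t = (1 + t) / 2 *
      Real.exp (-∫ l in (0 : ℝ)..1,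
        (1 - l ^ 2) * (1 - t) ^ 2 / ((l + t) * (1 + l * t) * (1 + l) ^ 2) * h l)) :
    f 1 = 1 ∧ ∀ t : ℝ, 0 < t → f t = t * f t⁻¹ := by
  constructor
  · rw [hf]
    simp
  · intro t ht
    rw [hf, hf]
    have hint : (∫ l in (0 : ℝ)..1,
        (1 - l ^ 2) * (1 - t) ^ 2 / ((l + t) * (1 + l * t) * (1 + l) ^ 2) * h l)
        = ∫ l in (0 : ℝ)..1,
        (1 - l ^ 2) * (1 - t⁻¹) ^ 2 / ((l + t⁻¹) * (1 + l * t⁻¹) * (1 + l) ^ 2) * h l := by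
      apply intervalIntegral.integral_congr
      intro l hl
      rw [Set.uIcc_of_le (by norm_num)] at hl
      obtain ⟨hl0, hl1⟩ := hl
      have h1 : l + t ≠ 0 := by positivity
      have h2 : 1 + l * t ≠ 0 := by positivity
      have h3 : (1 : ℝ) + l ≠ 0 := by positivity
      have h4 : l + t⁻¹ ≠ 0 := by positivity
      have h5 : 1 + l * t⁻¹ ≠ 0 := by positivity
      simp only
      congr 1
      field_simp
      ring
    rw [hint]
    field_simp
    ring
end

section
/- The integral kernel K(λ,t) = (1−λ²)(1−t)² / ((λ+t)(1+λt)(1+λ)²) is nonnegative for all λ ∈ [0,1) and t > 0, and with constant weight h ≡ 1 one obtains exactly f(t) = 2t/(1+t), i.e., for every t > 0, ((1+t)/2)·exp(−∫₀¹ K(λ,t)dλ) = 2t/(1+t). -/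
open MeasureTheory

lemma kernel_integral (t : ℝ) (ht : 0 < t) :
    (∫ l in (0 : ℝ)..1,
        (1 - l ^ 2) * (1 - t) ^ 2 / ((l + t) * (1 + l * t) * (1 + l) ^ 2)) =
      Real.log ((1 + t) ^ 2 / (4 * t)) := by
  have key : ∀ l ∈ Set.uIcc (0:ℝ) 1,
      HasDerivAt (fun x : ℝ => Real.log (x + t) + Real.log (1 + x * t)
        - 2 * Real.log (1 + x))
        ((1 - l ^ 2) * (1 - t) ^ 2 / ((l + t) * (1 + l * t) * (1 + l) ^ 2)) l := by
    intro l hl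
    rw [Set.uIcc_of_le (by norm_num)] at hl
    obtain ⟨hl0, hl1⟩ := hl
    have h1 : (0:ℝ) < l + t := by linarith
    have h2 : (0:ℝ) < 1 + l * t := by positivity
    have h3 : (0:ℝ) < 1 + l := by linarith
    have d1 : HasDerivAt (fun x : ℝ => Real.log (x + t)) (1 / (l + t)) l := by
      simpa using ((hasDerivAt_id l).add_const t).log h1.ne'
    have d2 : HasDerivAt (fun x : ℝ => Real.log (1 + x * t)) (t / (1 + l * t)) l := by
      simpa using (((hasDerivAt_id l).mul_const t).const_add 1).log h2.ne'
    have d3 : HasDerivAt (fun x : ℝ => 2 * Real.log (1 + x)) (2 * (1 / (1 + l))) l := by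
      simpa using (((hasDerivAt_id l).const_add 1).log h3.ne').const_mul 2
    have := (d1.add d2).sub d3
    refine this.congr_deriv ?_
    field_simp
    ring
  have hcont : ContinuousOn
      (fun l : ℝ => (1 - l ^ 2) * (1 - t) ^ 2 / ((l + t) * (1 + l * t) * (1 + l) ^ 2))
      (Set.uIcc (0:ℝ) 1) := by
    apply ContinuousOn.div (by fun_prop) (by fun_prop)
    intro l hl
    rw [Set.uIcc_of_le (by norm_num)] at hl
    obtain ⟨hl0, hl1⟩ := hl
    have h1 : (0:ℝ) < l + t := by linarith
    have h2 : (0:ℝ) < 1 + l * t := by positivity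
    have h3 : (0:ℝ) < 1 + l := by linarith
    positivity
  rw [intervalIntegral.integral_eq_sub_of_hasDerivAt key
    (hcont.intervalIntegrable)]
  have h4 : (0:ℝ) < 4 * t := by linarith
  have h1t : (0:ℝ) < 1 + t := by linarith
  rw [Real.log_div (by positivity) (by positivity), Real.log_pow,
    Real.log_mul (by norm_num) ht.ne']
  rw [show (1:ℝ) + 1 * t = 1 + t by ring, show (0:ℝ) + t = t by ring,
    show (1:ℝ) + 1 = 2 by norm_num, show (1:ℝ) + 0 = 1 by norm_num,
    show (0:ℝ) * t = 0 by ring]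
  rw [Real.log_one, show (4:ℝ) = 2^2 by norm_num, Real.log_pow]
  push_cast
  norm_num
  ring

/-- The integral kernel `K(λ,t) = (1−λ²)(1−t)²/((λ+t)(1+λt)(1+λ)²)` is
nonnegative for `λ ∈ [0,1)` and `t > 0`, its integral over `[0,1]` equals
`log((1+t)²/(4t))`, and consequently with constant weight `h ≡ 1` one obtains
`((1+t)/2)·exp(−∫₀¹ K(λ,t) dλ) = 2t/(1+t)`. -/
theorem kernel_nonneg_and_constant_weight :
    (∀ l t : ℝ, 0 ≤ l → l < 1 → 0 < t →
      0 ≤ (1 - l ^ 2) * (1 - t) ^ 2 / ((l + t) * (1 + l * t) * (1 + l) ^ 2)) ∧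
    ∀ t : ℝ, 0 < t →
      (∫ l in (0 : ℝ)..1,
          (1 - l ^ 2) * (1 - t) ^ 2 / ((l + t) * (1 + l * t) * (1 + l) ^ 2)) =
        Real.log ((1 + t) ^ 2 / (4 * t)) ∧
      (1 + t) / 2 * Real.exp (-∫ l in (0 : ℝ)..1,
          (1 - l ^ 2) * (1 - t) ^ 2 / ((l + t) * (1 + l * t) * (1 + l) ^ 2)) =
        2 * t / (1 + t) := by
  constructor
  · intro l t hl0 hl1 ht
    have h1 : (0:ℝ) ≤ 1 - l ^ 2 := by nlinarith
    have h2 : (0:ℝ) < l + t := by linarith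
    have h3 : (0:ℝ) < 1 + l * t := by positivity
    have h4 : (0:ℝ) < 1 + l := by linarith
    positivity
  · intro t ht
    refine ⟨kernel_integral t ht, ?_⟩
    rw [kernel_integral t ht, ← Real.log_inv, Real.exp_log (by positivity)]
    have h1t : (0:ℝ) < 1 + t := by linarith
    field_simp
    ring
end

section
/- For each α ∈ [0,1], the function f_α(t) = t^α ((1+t)/2)^{1−2α} on (0,∞) satisfies f_α(1) = 1 and f_α(t) = t f_α(1/t), and the family is pointwise monotone decreasing in α: if 0 ≤ α ≤ β ≤ 1 then f_β(t) ≤ f_α(t) for all t > 0, with f₀(t) = (1+t)/2 and f₁(t) = 2t/(1+t). -/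
/-!
Writing `m = (1 + t) / 2` for the arithmetic mean of `1` and `t`, one has
`f_α(t) = m · (t / m²)^α`. By AM–GM the ratio `t / m²` lies in `(0, 1]`, so `f_α(t)` decreases
in `α`; the ratio is invariant under `t ↦ t⁻¹` while `m` becomes `m / t`, which gives
`f_α(t) = t f_α(1/t)`.
-/

open Real

lemma rpow_mul_rpow_one_sub_two_mul {t m : ℝ} (ht : 0 ≤ t) (hm : 0 < m) (a : ℝ) :
    t ^ a * m ^ (1 - 2 * a) = m * (t / m ^ 2) ^ a := by
  have hm2 : m ^ (2 * a) = (m ^ 2) ^ a := by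
    rw [rpow_mul hm.le, rpow_two]
  rw [rpow_sub hm, rpow_one, div_rpow ht (by positivity), hm2]
  field_simp

lemma div_sq_mean_le_one (t : ℝ) : t / ((1 + t) / 2) ^ 2 ≤ 1 :=
  div_le_one_of_le₀ (by nlinarith [sq_nonneg (1 - t)]) (sq_nonneg _)

lemma inv_div_sq_mean_inv (t : ℝ) :
    t⁻¹ / ((1 + t⁻¹) / 2) ^ 2 = t / ((1 + t) / 2) ^ 2 := by
  rcases eq_or_ne t 0 with rfl | ht
  · simp
  rw [show (1 + t⁻¹) / 2 = (1 + t) / 2 * t⁻¹ by field_simp; ring, mul_pow]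
  field_simp

/-- The family `f_α(t) = t^α ((1+t)/2)^(1−2α)` satisfies `f_α(1) = 1`,
`f_α(t) = t f_α(1/t)`, is pointwise decreasing in `α` on `[0,1]`, and
interpolates between `f₀(t) = (1+t)/2` and `f₁(t) = 2t/(1+t)`. -/
theorem falpha_family_properties (fa : ℝ → ℝ → ℝ)
    (hfa : ∀ a t : ℝ, fa a t = t ^ a * ((1 + t) / 2) ^ (1 - 2 * a)) :
    (∀ α ∈ Set.Icc (0 : ℝ) 1,
      fa α 1 = 1 ∧ ∀ t : ℝ, 0 < t → fa α t = t * fa α t⁻¹) ∧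
    (∀ α β : ℝ, 0 ≤ α → α ≤ β → β ≤ 1 → ∀ t : ℝ, 0 < t → fa β t ≤ fa α t) ∧
    (∀ t : ℝ, 0 < t → fa 0 t = (1 + t) / 2 ∧ fa 1 t = 2 * t / (1 + t)) := by
  have hmean : ∀ a t : ℝ, 0 < t → fa a t = (1 + t) / 2 * (t / ((1 + t) / 2) ^ 2) ^ a :=
    fun a t ht ↦ by rw [hfa, rpow_mul_rpow_one_sub_two_mul ht.le (by positivity)]
  refine ⟨fun α _ ↦ ⟨by simp [hfa], fun t ht ↦ ?_⟩, fun α β _ hαβ _ t ht ↦ ?_, fun t ht ↦ ?_⟩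
  · rw [hmean α t ht, hmean α t⁻¹ (inv_pos.mpr ht), inv_div_sq_mean_inv]
    field_simp
    ring
  · rw [hmean α t ht, hmean β t ht]
    exact mul_le_mul_of_nonneg_left
      (rpow_le_rpow_of_exponent_ge (by positivity) (div_sq_mean_le_one t) hαβ) (by positivity)
  · rw [hmean 0 t ht, hmean 1 t ht]
    constructor
    · simp
    · rw [rpow_one]
      field_simp
end
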